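/- Let H be a class of real-valued functions on a set Z, let Φ: ℝ → ℝ be L-Lipschitz, and let S = {z_1,...,z_N} ⊆ Z. Then the empirical Rademacher complexity satisfies R̂_S(Φ ∘ H) ≤ L · R̂_S(H), where R̂_S(G) = (1/N) E_σ [sup_{g ∈ G} ∑_{i=1}^N σ_i g(z_i)] and σ_i are i.i.d. uniform ±1 random variables. -/

import Mathlib

/-!
Ledoux–Talagrand comparison, one coordinate at a time. Pairing each sign vector `σ` with the
vector that differs from it only at coordinate `j`, the `j`-th terms enter the two suprema with
opposite signs, and a two-point inequality shows that replacing the `j`-th coordinates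
`Φ (h (z j))` by the coordinates `L * h (z j)`, whose differences are at least as large, cannot
decrease the sum of the two suprema. After all `N` replacements `L` factors out. Every supremum
involved is finite because the hypothesis on `H` (applied to suitable pairs of sign vectors)
bounds each coordinate `h (z i)`, hence also `Φ (h (z i))`.
-/

open BigOperators Finset

/-- Empirical Rademacher complexity of a class `G` of real-valued functions on a sample
`z : Fin N → Z`: `(1/N) E_σ [sup_{g ∈ G} ∑ i, σ i * g (z i)]`, where the expectation is
the uniform average over the `2^N` sign vectors `σ ∈ {-1,1}^N`. -/
noncomputable def empRad {Z : Type*} (N : ℕ) (z : Fin N → Z) (G : Set (Z → ℝ)) : ℝ :=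
  (1 / (N : ℝ)) *
    ((∑ σ : Fin N → Bool,
      sSup ((fun g => ∑ i, (if σ i then (1 : ℝ) else -1) * g (z i)) '' G)) / 2 ^ N)

def rademacherSign (b : Bool) : ℝ := if b then 1 else -1

@[simp] lemma rademacherSign_true : rademacherSign true = 1 := rfl

@[simp] lemma rademacherSign_false : rademacherSign false = -1 := rfl

@[simp] lemma rademacherSign_not (b : Bool) : rademacherSign (!b) = -rademacherSign b := by
  cases b <;> simp

@[simp] lemma abs_rademacherSign (b : Bool) : |rademacherSign b| = 1 := by
  cases b <;> simp

noncomputable def rademacherSum {ι : Type*} {N : ℕ} (x : ι → Fin N → ℝ) : ℝ :=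
  ∑ σ : Fin N → Bool, ⨆ k, ∑ i, rademacherSign (σ i) * x k i

lemma empRad_image {Y Z : Type*} (N : ℕ) (z : Fin N → Z) (f : Y → Z → ℝ) (s : Set Y) :
    empRad N z (f '' s) = 1 / N * (rademacherSum (fun y : s => fun i => f y (z i)) / 2 ^ N) := by
  simp only [empRad, Set.image_image]
  simp only [Set.image_eq_range]
  rfl

lemma rademacherSum_const_mul {ι : Type*} {N : ℕ} {L : ℝ} (hL : 0 ≤ L) (x : ι → Fin N → ℝ) :
    rademacherSum (fun k i => L * x k i) = L * rademacherSum x := by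
  simp only [rademacherSum, mul_sum, Real.mul_iSup_of_nonneg hL, mul_left_comm L]

lemma sum_le_sum_of_add_comp_involutive {α : Type*} [Fintype α] {e : α → α}
    (he : Function.Involutive e) {f g : α → ℝ} (h : ∀ a, f a + f (e a) ≤ g a + g (e a)) :
    ∑ a, f a ≤ ∑ a, g a := by
  have hf := Equiv.sum_comp he.toPerm f
  have hg := Equiv.sum_comp he.toPerm g
  have := sum_le_sum fun a (_ : a ∈ univ) => h a
  simp only [sum_add_distrib, Function.Involutive.coe_toPerm] at this hf hg
  linarith

/-- For `k, l` the contraction hypothesis bounds `p k - p l` by `q k - q l` or by `q l - q k`,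
so `(p k + a k) + (-p l + a l)` is dominated by the pair `(k, l)` or `(l, k)` on the right. -/
lemma iSup_add_iSup_neg_le {ι : Type*} {p q a : ι → ℝ} (hpq : ∀ k l, |p k - p l| ≤ |q k - q l|)
    (hq : BddAbove (Set.range fun k => q k + a k)) (hq' : BddAbove (Set.range fun k => -q k + a k)) :
    (⨆ k, p k + a k) + (⨆ k, -p k + a k) ≤ (⨆ k, q k + a k) + (⨆ k, -q k + a k) := by
  cases isEmpty_or_nonempty ι
  · simp
  rw [← le_sub_iff_add_le]
  refine ciSup_le fun k => ?_
  rw [le_sub_comm]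
  refine ciSup_le fun l => ?_
  have hkl := (le_abs_self _).trans (hpq k l)
  rcases le_total (q l) (q k) with h | h
  · rw [abs_of_nonneg (sub_nonneg.2 h)] at hkl
    have := le_ciSup hq k
    have := le_ciSup hq' l
    linarith
  · rw [abs_of_nonpos (sub_nonpos.2 h)] at hkl
    have := le_ciSup hq l
    have := le_ciSup hq' k
    linarith

lemma rademacherSum_le_of_contraction_at {ι : Type*} {N : ℕ} (j : Fin N) {v w : ι → Fin N → ℝ}
    (hoff : ∀ k, ∀ i ≠ j, w k i = v k i) (hj : ∀ k l, |v k j - v l j| ≤ |w k j - w l j|)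
    (hw : ∀ σ : Fin N → Bool, BddAbove (Set.range fun k => ∑ i, rademacherSign (σ i) * w k i)) :
    rademacherSum v ≤ rademacherSum w := by
  refine sum_le_sum_of_add_comp_involutive (e := fun σ => Function.update σ j (!σ j))
    (fun σ => by simp) fun σ => ?_
  set a : ι → ℝ := fun k => ∑ i ∈ univ.erase j, rademacherSign (σ i) * v k i
  have split : ∀ (τ : Fin N → Bool) (y : ι → Fin N → ℝ), (∀ i ≠ j, τ i = σ i) →
      (∀ k, ∀ i ≠ j, y k i = v k i) →
      ∀ k, ∑ i, rademacherSign (τ i) * y k i = rademacherSign (τ j) * y k j + a k := by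
    intro τ y hτ hy k
    rw [← add_sum_erase _ _ (mem_univ j)]
    refine congrArg _ (sum_congr rfl fun i hi => ?_)
    rw [hτ i (ne_of_mem_erase hi), hy k i (ne_of_mem_erase hi)]
  have hflip : ∀ i ≠ j, Function.update σ j (!σ j) i = σ i :=
    fun i hi => Function.update_of_ne hi _ _
  have hw₁ := hw σ
  have hw₂ := hw (Function.update σ j (!σ j))
  simp only [split σ v (fun _ _ => rfl) (fun _ _ _ => rfl), split _ v hflip (fun _ _ _ => rfl),
    split σ w (fun _ _ => rfl) hoff, split _ w hflip hoff, Function.update_self,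
    rademacherSign_not, neg_mul] at hw₁ hw₂ ⊢
  refine iSup_add_iSup_neg_le (fun k l => ?_) hw₁ hw₂
  simpa only [← mul_sub, abs_mul, abs_rademacherSign, one_mul] using hj k l

lemma bddAbove_range_sum_mul {ι : Type*} {N : ℕ} {x : ι → Fin N → ℝ}
    (hx : ∀ i, BddAbove (Set.range fun k => |x k i|)) (c : Fin N → ℝ) :
    BddAbove (Set.range fun k => ∑ i, c i * x k i) := by
  choose C hC using hx
  refine ⟨∑ i, |c i| * C i, ?_⟩
  rintro _ ⟨k, rfl⟩
  refine sum_le_sum fun i _ => ?_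
  calc c i * x k i ≤ |c i| * |x k i| := (le_abs_self _).trans_eq (abs_mul _ _)
    _ ≤ |c i| * C i := mul_le_mul_of_nonneg_left (hC i ⟨k, rfl⟩) (abs_nonneg _)

theorem rademacherSum_le_of_contraction {ι : Type*} {N : ℕ} {v w : ι → Fin N → ℝ}
    (hvw : ∀ i k l, |v k i - v l i| ≤ |w k i - w l i|)
    (hv : ∀ i, BddAbove (Set.range fun k => |v k i|))
    (hw : ∀ i, BddAbove (Set.range fun k => |w k i|)) :
    rademacherSum v ≤ rademacherSum w := by
  classical
  let mix : Finset (Fin N) → ι → Fin N → ℝ := fun T k i => if i ∈ T then w k i else v k i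
  have hmix : ∀ T, rademacherSum v ≤ rademacherSum (mix T) := by
    intro T
    induction T using Finset.induction_on with
    | empty => simp [mix]
    | insert j T hj ih =>
      refine ih.trans (rademacherSum_le_of_contraction_at j (fun k i hi => by simp [mix, hi])
        (fun k l => by simp [mix, hj, hvw]) fun σ => bddAbove_range_sum_mul (fun i => ?_) _)
      by_cases hi : i ∈ insert j T <;> simp [mix, hi, hv i, hw i]
  simpa [mix] using hmix univ

lemma bddAbove_range_abs_of_bddAbove_sum {ι : Type*} {N : ℕ} {x : ι → Fin N → ℝ}
    (hx : ∀ σ : Fin N → Bool,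
      BddAbove (Set.range fun k => ∑ i, rademacherSign (σ i) * x k i)) (i : Fin N) :
    BddAbove (Set.range fun k => |x k i|) := by
  have hsign : ∀ b, BddAbove (Set.range fun k => rademacherSign b * x k i) := by
    intro b
    obtain ⟨C₁, hC₁⟩ := hx fun _ => b
    obtain ⟨C₂, hC₂⟩ := hx (Function.update (fun _ => !b) i b)
    refine ⟨(C₁ + C₂) / 2, ?_⟩
    rintro _ ⟨k, rfl⟩
    have h₁ := hC₁ ⟨k, rfl⟩
    have h₂ := hC₂ ⟨k, rfl⟩
    -- the sign vectors `b` and "`!b` off `i`" add up to `2 b` at `i` and to `0` elsewhere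
    have hsum : (∑ l, rademacherSign b * x k l) +
        ∑ l, rademacherSign (Function.update (fun _ => !b) i b l) * x k l =
          2 * (rademacherSign b * x k i) := by
      rw [← sum_add_distrib, Fintype.sum_eq_single i]
      · simp only [Function.update_self]
        ring
      · intro l hl
        simp [Function.update_of_ne hl]
    dsimp only at h₁ h₂
    linarith
  obtain ⟨C₁, hC₁⟩ := hsign true
  obtain ⟨C₂, hC₂⟩ := hsign false
  refine ⟨max C₁ C₂, ?_⟩
  rintro _ ⟨k, rfl⟩
  have h₁ := hC₁ ⟨k, rfl⟩
  have h₂ := hC₂ ⟨k, rfl⟩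
  simp only [rademacherSign_true, rademacherSign_false, one_mul, neg_one_mul] at h₁ h₂
  exact abs_le'.2 ⟨h₁.trans (le_max_left _ _), h₂.trans (le_max_right _ _)⟩

lemma bddAbove_range_abs_comp {ι : Type*} {Φ : ℝ → ℝ} {L : ℝ} (hL : 0 ≤ L)
    (hΦ : ∀ a b : ℝ, |Φ a - Φ b| ≤ L * |a - b|) {f : ι → ℝ}
    (hf : BddAbove (Set.range fun k => |f k|)) :
    BddAbove (Set.range fun k => |Φ (f k)|) := by
  obtain ⟨C, hC⟩ := hf
  refine ⟨|Φ 0| + L * C, ?_⟩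
  rintro _ ⟨k, rfl⟩
  have hΦk := (abs_sub_abs_le_abs_sub _ _).trans (hΦ (f k) 0)
  have hfk := mul_le_mul_of_nonneg_left (hC ⟨k, rfl⟩) hL
  rw [sub_zero] at hΦk
  dsimp only at hfk ⊢
  linarith

theorem talagrand_contraction_general {Z : Type*} (N : ℕ) (z : Fin N → Z)
    (H : Set (Z → ℝ))
    (Φ : ℝ → ℝ) (L : ℝ) (hL : 0 ≤ L)
    (hΦ : ∀ a b : ℝ, |Φ a - Φ b| ≤ L * |a - b|)
    (hbddH : ∀ σ : Fin N → Bool,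
      BddAbove ((fun g => ∑ i, (if σ i then (1 : ℝ) else -1) * g (z i)) '' H)) :
    empRad N z ((fun h => Φ ∘ h) '' H) ≤ L * empRad N z H := by
  set x : H → Fin N → ℝ := fun h i => (h : Z → ℝ) (z i)
  have hx : ∀ i, BddAbove (Set.range fun h => |x h i|) :=
    bddAbove_range_abs_of_bddAbove_sum fun σ => by
      have := hbddH σ
      rwa [Set.image_eq_range] at this
  have hmul : ∀ a b : ℝ, |L * a - L * b| = L * |a - b| := fun a b => by
    rw [← mul_sub, abs_mul, abs_of_nonneg hL]
  have hcomp : rademacherSum (fun h i => Φ (x h i)) ≤ rademacherSum (fun h i => L * x h i) :=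
    rademacherSum_le_of_contraction (fun i k l => (hΦ _ _).trans_eq (hmul _ _).symm)
      (fun i => bddAbove_range_abs_comp hL hΦ (hx i))
      (fun i => bddAbove_range_abs_comp hL (fun a b => (hmul a b).le) (hx i))
  have hH : empRad N z H = 1 / N * (rademacherSum x / 2 ^ N) := by
    simpa using empRad_image N z id H
  calc empRad N z ((fun h => Φ ∘ h) '' H)
      = 1 / N * (rademacherSum (fun h i => Φ (x h i)) / 2 ^ N) := empRad_image N z _ H
    _ ≤ 1 / N * (rademacherSum (fun h i => L * x h i) / 2 ^ N) := by gcongr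
    _ = L * empRad N z H := by rw [rademacherSum_const_mul hL, hH]; ring

/-- Talagrand's contraction lemma: for an `L`-Lipschitz `Φ : ℝ → ℝ` and a class `H`
of real-valued functions (with well-defined, finite suprema),
`R̂_S(Φ ∘ H) ≤ L * R̂_S(H)`. -/
theorem talagrand_contraction {Z : Type*} (N : ℕ) (z : Fin N → Z)
    (H : Set (Z → ℝ)) (hne : H.Nonempty)
    (Φ : ℝ → ℝ) (L : ℝ) (hL : 0 ≤ L)
    (hΦ : ∀ a b : ℝ, |Φ a - Φ b| ≤ L * |a - b|)
    (hbddH : ∀ σ : Fin N → Bool,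
      BddAbove ((fun g => ∑ i, (if σ i then (1 : ℝ) else -1) * g (z i)) '' H))
    (hbddΦH : ∀ σ : Fin N → Bool,
      BddAbove ((fun g => ∑ i, (if σ i then (1 : ℝ) else -1) * g (z i)) ''
        ((fun h => Φ ∘ h) '' H))) :
    empRad N z ((fun h => Φ ∘ h) '' H) ≤ L * empRad N z H :=
  talagrand_contraction_general N z H Φ L hL hΦ hbddH
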